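/- arXiv:2602.19892 — 2 statements merged into one kernel-verified Lean document; each statement's English description precedes it below -/
import Mathlib

section
/- Let γ > 1, f nonnegative with ∑ f_j = 1, r nonnegative, and suppose ∑_k f_k(1−γ^{−k}) > 0. Define Φ = ∑_{j=1}^M f_j γ^{−j} + ∑_{j=1}^M r_j f_j γ^{−1}(1−γ^{−j})/(1−γ^{−1}), WAC = ∑_j w_j r_j with w_j = f_j(1−γ^{−j})/∑_k f_k(1−γ^{−k}), θ₁ = (∑_k f_k γ^{1−k})/(∑_k f_k (1−γ^{−k})/(1−γ^{−1})), and g = γ − 1. Then Φ = (θ₁ + WAC)/(θ₁ + g), and consequently Φ < 1 if and only if WAC < g. -/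
open Finset

theorem stmt_5 (M : ℕ) (hM : 1 ≤ M) (f r : Fin M → ℝ) (γ : ℝ) (hγ : 1 < γ)
    (hf : ∀ j, 0 ≤ f j) (hfsum : ∑ j, f j = 1) (hr : ∀ j, 0 ≤ r j)
    (hpos : 0 < ∑ k, f k * (1 - (γ ^ ((k : ℕ) + 1))⁻¹))
    (Φ WAC θ₁ g : ℝ)
    (hΦ : Φ = ∑ j, f j * (γ ^ ((j : ℕ) + 1))⁻¹ +
      ∑ j, r j * f j * γ⁻¹ * (1 - (γ ^ ((j : ℕ) + 1))⁻¹) / (1 - γ⁻¹))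
    (hWAC : WAC = ∑ j, f j * (1 - (γ ^ ((j : ℕ) + 1))⁻¹) /
      (∑ k, f k * (1 - (γ ^ ((k : ℕ) + 1))⁻¹)) * r j)
    (hθ₁ : θ₁ = (∑ k, f k * (γ ^ (k : ℕ))⁻¹) /
      (∑ k, f k * (1 - (γ ^ ((k : ℕ) + 1))⁻¹) / (1 - γ⁻¹)))
    (hg : g = γ - 1) :
    Φ = (θ₁ + WAC) / (θ₁ + g) ∧ (Φ < 1 ↔ WAC < g) := by
  have hγ0 : (0:ℝ) < γ := lt_trans one_pos hγ
  have hγne : γ ≠ 0 := ne_of_gt hγ0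
  have hinv : γ⁻¹ < 1 := by
    rw [inv_lt_one_iff₀]; right; exact hγ
  have hc : (0:ℝ) < 1 - γ⁻¹ := by linarith
  have hcne : (1:ℝ) - γ⁻¹ ≠ 0 := ne_of_gt hc
  set S := ∑ k, f k * (1 - (γ ^ ((k : ℕ) + 1))⁻¹) with hSdef
  set A := ∑ k : Fin M, f k * (γ ^ (k : ℕ))⁻¹ with hAdef
  set R := ∑ j : Fin M, r j * f j * (1 - (γ ^ ((j : ℕ) + 1))⁻¹) with hRdef
  have hSne : S ≠ 0 := ne_of_gt hpos
  have hA0 : 0 ≤ A := Finset.sum_nonneg fun j _ =>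
    mul_nonneg (hf j) (by positivity)
  have hpow : ∀ j : Fin M, (γ ^ ((j:ℕ)+1))⁻¹ = γ⁻¹ * (γ ^ (j:ℕ))⁻¹ := by
    intro j; rw [pow_succ, mul_inv]; ring
  have hSA : S = 1 - γ⁻¹ * A := by
    have h1 : S = (∑ k, f k) - γ⁻¹ * A := by
      rw [hSdef, hAdef, Finset.mul_sum, ← Finset.sum_sub_distrib]
      refine Finset.sum_congr rfl fun j _ => ?_
      rw [hpow j]; ring
    rw [h1, hfsum]
  have hΦ' : Φ = γ⁻¹ * A + γ⁻¹ * R / (1 - γ⁻¹) := by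
    rw [hΦ]
    congr 1
    · rw [hAdef, Finset.mul_sum]
      refine Finset.sum_congr rfl fun j _ => ?_
      rw [hpow j]; ring
    · rw [hRdef, Finset.mul_sum, Finset.sum_div]
      refine Finset.sum_congr rfl fun j _ => ?_
      ring
  have hW : WAC = R / S := by
    rw [hWAC, hRdef, Finset.sum_div]
    refine Finset.sum_congr rfl fun j _ => ?_
    ring
  have hθ : θ₁ = A * (1 - γ⁻¹) / S := by
    rw [hθ₁, ← Finset.sum_div, div_div_eq_mul_div]
  have hθg : θ₁ + g = (γ - 1) / S := by
    rw [hθ, hg]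
    rw [div_add' _ _ _ hSne]
    congr 1
    rw [hSA]
    field_simp
    ring
  have hθgpos : 0 < θ₁ + g := by
    rw [hθg]; exact div_pos (by linarith) hpos
  have hmain : Φ = (θ₁ + WAC) / (θ₁ + g) := by
    rw [hΦ', hθg, hθ, hW]
    have hγ1 : γ - 1 ≠ 0 := by linarith
    field_simp
  refine ⟨hmain, ?_⟩
  rw [hmain, div_lt_one hθgpos, add_lt_add_iff_left]
end

section
/- Let γ > 1, f ∈ ℝ^M nonnegative with ∑ f_j = 1, and let T be the M×M upper-triangular Toeplitz matrix with T_{i,j} = γ^{−(j−i)} for j ≥ i. Then the vector θ = Tf / (𝟙ᵀ T f) (assuming 𝟙ᵀTf > 0) satisfies θ_j = (∑_{k=j}^M γ^{j−k} f_k) / (∑_{k=1}^M f_k (1−γ^{−k})/(1−γ^{−1})), coinciding with the deterministic steady-state portfolio shares; in particular the invariant portfolio shares are independent of the rate vector r, the deficit level, and the rate–deficit covariance Σ. -/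
/-! Row `j` of `T f` is the discounted tail sum `∑_{k ≥ j} γ^{j-k} f_k`. Summing over the rows
and exchanging the two sums, `f_k` collects the weights `γ^{i-k}` for `i ≤ k`, a geometric sum in
`γ⁻¹` equal to `(1 - γ^{-(k+1)}) / (1 - γ⁻¹)`. -/

open Finset Matrix

section UpperToeplitz

variable {R : Type*} [NonUnitalNonAssocSemiring R] {M : ℕ} {a : ℕ → R}
  {T : Matrix (Fin M) (Fin M) R}

theorem mulVec_upperToeplitz_apply (hT : ∀ i j, T i j = if i ≤ j then a ((j : ℕ) - i) else 0)
    (f : Fin M → R) (j : Fin M) :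
    T.mulVec f j = ∑ k ∈ Ici j, a ((k : ℕ) - j) * f k := by
  simp only [mulVec, dotProduct, hT, ite_mul, zero_mul, ← sum_filter, filter_le_eq_Ici]

theorem sum_mulVec_upperToeplitz (hT : ∀ i j, T i j = if i ≤ j then a ((j : ℕ) - i) else 0)
    (f : Fin M → R) :
    ∑ i, T.mulVec f i = ∑ k : Fin M, (∑ i ∈ Iic k, a ((k : ℕ) - i)) * f k := by
  simp only [mulVec_upperToeplitz_apply hT, sum_mul]
  exact sum_comm' fun i k => by simp

end UpperToeplitz

theorem Fin.sum_Iic_sub_eq_sum_range {R : Type*} [AddCommMonoid R] {M : ℕ} (a : ℕ → R)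
    (k : Fin M) :
    ∑ i ∈ Iic k, a ((k : ℕ) - i) = ∑ d ∈ range ((k : ℕ) + 1), a d := by
  rw [← sum_range_reflect, Nat.range_succ_eq_Iic, ← Fin.map_valEmbedding_Iic, sum_map]
  simp only [Fin.valEmbedding_apply, Nat.add_sub_cancel]

theorem sum_range_inv_pow {K : Type*} [DivisionRing K] {γ : K} (hγ : γ ≠ 1) (n : ℕ) :
    ∑ d ∈ range n, (γ ^ d)⁻¹ = (1 - (γ ^ n)⁻¹) / (1 - γ⁻¹) := by
  have hγinv : γ⁻¹ ≠ 1 := by rwa [Ne, inv_eq_one]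
  simpa only [range_eq_Ico, pow_zero, inv_pow] using geom_sum_Ico' hγinv (Nat.zero_le n)

theorem stmt_16_general (M : ℕ) (γ : ℝ) (hγ : 1 < γ)
    (f : Fin M → ℝ)
    (T : Matrix (Fin M) (Fin M) ℝ)
    (hT : ∀ i j, T i j = if i ≤ j then (γ ^ ((j : ℕ) - (i : ℕ)))⁻¹ else 0) :
    ∀ j, T.mulVec f j / (∑ i, T.mulVec f i) =
      (∑ k ∈ Finset.Ici j, (γ ^ ((k : ℕ) - (j : ℕ)))⁻¹ * f k) /
        (∑ k, f k * (1 - (γ ^ ((k : ℕ) + 1))⁻¹) / (1 - γ⁻¹)) := by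
  intro j
  rw [mulVec_upperToeplitz_apply (a := fun d => (γ ^ d)⁻¹) hT,
    sum_mulVec_upperToeplitz (a := fun d => (γ ^ d)⁻¹) hT]
  congr 1
  refine sum_congr rfl fun k _ => ?_
  rw [Fin.sum_Iic_sub_eq_sum_range (fun d => (γ ^ d)⁻¹), sum_range_inv_pow hγ.ne']
  ring

theorem stmt_16 (M : ℕ) (hM : 1 ≤ M) (γ : ℝ) (hγ : 1 < γ)
    (f : Fin M → ℝ) (hf : ∀ j, 0 ≤ f j) (hfsum : ∑ j, f j = 1)
    (T : Matrix (Fin M) (Fin M) ℝ)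
    (hT : ∀ i j, T i j = if i ≤ j then (γ ^ ((j : ℕ) - (i : ℕ)))⁻¹ else 0)
    (hpos : 0 < ∑ i, T.mulVec f i) :
    ∀ j, T.mulVec f j / (∑ i, T.mulVec f i) =
      (∑ k ∈ Finset.Ici j, (γ ^ ((k : ℕ) - (j : ℕ)))⁻¹ * f k) /
        (∑ k, f k * (1 - (γ ^ ((k : ℕ) + 1))⁻¹) / (1 - γ⁻¹)) :=
  stmt_16_general M γ hγ f T hT
end
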